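/- Identify correlated policies with points of the simplex Δ(Π_det) and assume J^{π̃,k}(μ) is differentiable in π̃. For any two correlated policies π̃, π̃' ∈ Δ(Π_det), the directional derivative of J^{π̃,k}(μ) at π̃ in the direction π̃' − π̃ has the closed form ∇_{π̃'−π̃} J^{π̃,k}(μ) = (1/(1−γ^k)) · E_{s ∼ d_μ^{π̃,k}} [ Q^{π̃,k}(s, π̃') − J^{π̃,k}(s) ]. -/

import Mathlib

open Finset

noncomputable section

variable {S A D : Type*} [Fintype S] [Fintype A] [Fintype D] [DecidableEq S]

/-- Transition matrix of a deterministic policy `pol`. -/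
def detKernel (P : S → A → S → ℝ) (pol : S → A) : Matrix S S ℝ :=
  Matrix.of fun s s' => P s (pol s) s'

/-- Expected discounted cost incurred during the first `k` steps when following the
deterministic policy `pol` starting from state `s`. -/
def detCost (P : S → A → S → ℝ) (g : S → A → ℝ) (γ : ℝ) (pol : S → A) (k : ℕ) (s : S) : ℝ :=
  ∑ t ∈ Finset.range k, γ ^ t * ∑ s', (detKernel P pol ^ t) s s' * g s' (pol s')

/-- Value function `J^{π_det}(s)` of a deterministic policy. -/
def detJ (P : S → A → S → ℝ) (g : S → A → ℝ) (γ : ℝ) (pol : S → A) (s : S) : ℝ :=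
  ∑' t : ℕ, γ ^ t * ∑ s', (detKernel P pol ^ t) s s' * g s' (pol s')

/-- Value `J^{π_det}(μ)` of a deterministic policy from an initial distribution `μ`. -/
def detJInit (P : S → A → S → ℝ) (g : S → A → ℝ) (γ : ℝ) (pol : S → A) (μ : S → ℝ) : ℝ :=
  ∑ s, μ s * detJ P g γ pol s

/-- The `k`-step transition kernel of the correlated policy with weights `w`
over the family `p` of deterministic policies. -/
def corKernel (P : S → A → S → ℝ) (p : D → S → A) (w : D → ℝ) (k : ℕ) : Matrix S S ℝ :=
  ∑ d, w d • (detKernel P (p d) ^ k)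

/-- Expected discounted cost of one `k`-step block of the correlated policy from `s`. -/
def blockCost (P : S → A → S → ℝ) (g : S → A → ℝ) (γ : ℝ) (p : D → S → A) (w : D → ℝ)
    (k : ℕ) (s : S) : ℝ :=
  ∑ d, w d * detCost P g γ (p d) k s

/-- The `k`-step value function `J^{π̃,k}(s)` of the correlated policy `w`. -/
def Jk (P : S → A → S → ℝ) (g : S → A → ℝ) (γ : ℝ) (p : D → S → A) (w : D → ℝ)
    (k : ℕ) (s : S) : ℝ :=
  ∑' m : ℕ, γ ^ (m * k) * ∑ s', (corKernel P p w k ^ m) s s' * blockCost P g γ p w k s'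

/-- `J^{π̃,k}(μ)`. -/
def JkInit (P : S → A → S → ℝ) (g : S → A → ℝ) (γ : ℝ) (p : D → S → A) (w : D → ℝ)
    (k : ℕ) (μ : S → ℝ) : ℝ :=
  ∑ s, μ s * Jk P g γ p w k s

/-- The `k`-step Q-function `Q^{π̃,k}(s, π')` with deterministic second argument `pol`. -/
def Qk (P : S → A → S → ℝ) (g : S → A → ℝ) (γ : ℝ) (p : D → S → A) (w : D → ℝ)
    (k : ℕ) (s : S) (pol : S → A) : ℝ :=
  detCost P g γ pol k s + γ ^ k * ∑ s', (detKernel P pol ^ k) s s' * Jk P g γ p w k s'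

/-- The `k`-step Q-function `Q^{π̃,k}(s, π̃')` with correlated second argument `w'`. -/
def QkCor (P : S → A → S → ℝ) (g : S → A → ℝ) (γ : ℝ) (p : D → S → A) (w : D → ℝ)
    (k : ℕ) (s : S) (w' : D → ℝ) : ℝ :=
  ∑ d, w' d * Qk P g γ p w k s (p d)

/-- The `k`-step discounted state occupancy measure `d_μ^{π̃,k}(s)`. -/
def dOcc (P : S → A → S → ℝ) (γ : ℝ) (p : D → S → A) (w : D → ℝ) (k : ℕ)
    (μ : S → ℝ) (s : S) : ℝ :=
  (1 - γ ^ k) * ∑' m : ℕ, γ ^ (m * k) * ∑ s0, μ s0 * (corKernel P p w k ^ m) s0 s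

/-! While `‖γ ^ k • M_w‖ < 1` (`M_w` the `k`-step kernel, a convex combination of stochastic
matrices), the Neumann series give `J_w = (1 - γ ^ k M_w)⁻¹ c_w` and
`d_μ = (1 - γ ^ k) μᵀ (1 - γ ^ k M_w)⁻¹`. Kernel and block cost are linear in the weights, so
differentiating the resolvent along `w + t (w' - w)` yields `μᵀ R (c_u + γ ^ k M_u J_w)` with
`R = (1 - γ ^ k M_w)⁻¹` and `u = w' - w`; by the Bellman equation `J_w = c_w + γ ^ k M_w J_w`,
the bracket is `Q(·, w') - J_w`. Differentiability of `J` identifies `fderiv` with this line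
derivative. -/

open Matrix Topology

section Neumann

variable {n : Type*} [Fintype n] [DecidableEq n]

-- The ℓ∞ operator norm: row-stochastic matrices have norm at most `1` for it.
attribute [local instance] Matrix.linftyOpNormedRing Matrix.linftyOpNormedAlgebra

theorem Matrix.linfty_opNorm_le_one_of_mem_rowStochastic {M : Matrix n n ℝ}
    (hM : M ∈ rowStochastic ℝ n) : ‖M‖ ≤ 1 := by
  rw [linfty_opNorm_def, NNReal.coe_le_one]
  refine Finset.sup_le fun i _ => ?_
  rw [← NNReal.coe_le_coe, NNReal.coe_sum, NNReal.coe_one, ← sum_row_of_mem_rowStochastic hM i]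
  exact (Finset.sum_congr rfl fun j _ => by
    rw [coe_nnnorm, Real.norm_of_nonneg (nonneg_of_mem_rowStochastic hM)]).le

theorem hasSum_pow_mulVec {X : Matrix n n ℝ} (hX : ‖X‖ < 1) (c : n → ℝ) :
    HasSum (fun m => X ^ m *ᵥ c) (Ring.inverse (1 - X) *ᵥ c) :=
  (hasSum_geom_series_inverse X hX).map (mulVec.addMonoidHomLeft c)
    (continuous_id.matrix_mulVec continuous_const)

theorem hasSum_vecMul_pow {X : Matrix n n ℝ} (hX : ‖X‖ < 1) (μ : n → ℝ) :
    HasSum (fun m => μ ᵥ* X ^ m) (μ ᵥ* Ring.inverse (1 - X)) :=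
  (hasSum_geom_series_inverse X hX).map (AddMonoidHom.mk' (μ ᵥ* ·) fun A B => vecMul_add A B μ)
    (continuous_const.matrix_vecMul continuous_id)

theorem hasDerivAt_ringInverse_sub_smul {R : Type*} [NormedRing R] [NormedAlgebra ℝ R]
    [HasSummableGeomSeries R] (u : Rˣ) (y : R) :
    HasDerivAt (fun t : ℝ => Ring.inverse (↑u - t • y)) (↑u⁻¹ * y * ↑u⁻¹) 0 := by
  have hline : HasDerivAt (fun t : ℝ => (u : R) - t • y) (-y) 0 := by
    simpa using ((hasDerivAt_id (0 : ℝ)).smul_const y).const_sub (u : R)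
  have h := (hasFDerivAt_ringInverse (𝕜 := ℝ) u).comp_hasDerivAt_of_eq 0 hline (by simp)
  simpa [Function.comp_def, mul_assoc] using h

omit [DecidableEq n] in
theorem HasDerivAt.const_dotProduct {f : ℝ → n → ℝ} {f' : n → ℝ} {t : ℝ}
    (hf : HasDerivAt f f' t) (μ : n → ℝ) : HasDerivAt (fun t => μ ⬝ᵥ f t) (μ ⬝ᵥ f') t :=
  ((AddMonoidHom.mk' (μ ⬝ᵥ ·) (dotProduct_add μ)).toRealLinearMap
    (continuous_const.dotProduct continuous_id)).hasFDerivAt.comp_hasDerivAt t hf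

theorem hasDerivAt_inverse_one_sub_mulVec {X : Matrix n n ℝ} (hX : ‖X‖ < 1)
    (Y : Matrix n n ℝ) (c c' : n → ℝ) :
    HasDerivAt (fun t : ℝ => Ring.inverse (1 - (X + t • Y)) *ᵥ (c + t • c'))
      (Ring.inverse (1 - X) *ᵥ (c' + Y *ᵥ (Ring.inverse (1 - X) *ᵥ c))) 0 := by
  set u := Units.oneSub X hX
  have hB : Ring.inverse (1 - X) = ↑u⁻¹ := by rw [← Ring.inverse_unit]; rfl
  have hG : HasDerivAt (fun t : ℝ => Ring.inverse (1 - (X + t • Y)))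
      (Ring.inverse (1 - X) * Y * Ring.inverse (1 - X)) 0 := by
    simp_rw [← sub_sub, hB]
    exact hasDerivAt_ringInverse_sub_smul u Y
  have hmulVec (v : n → ℝ) : HasDerivAt (fun t : ℝ => Ring.inverse (1 - (X + t • Y)) *ᵥ v)
      ((Ring.inverse (1 - X) * Y * Ring.inverse (1 - X)) *ᵥ v) 0 := by
    -- elaborated first, so that `exact` unifies the ℓ∞ and the default matrix topologies
    have h := ((mulVec.addMonoidHomLeft v).toRealLinearMap
      (continuous_id.matrix_mulVec continuous_const)).hasFDerivAt.comp_hasDerivAt 0 hG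
    exact h
  have h := (hmulVec c).add ((hasDerivAt_id (0 : ℝ)).smul (hmulVec c'))
  have hf : (fun t : ℝ => Ring.inverse (1 - (X + t • Y)) *ᵥ (c + t • c')) =
      fun t => Ring.inverse (1 - (X + t • Y)) *ᵥ c + t • (Ring.inverse (1 - (X + t • Y)) *ᵥ c') := by
    simp only [mulVec_add, mulVec_smul]
  have hf' : Ring.inverse (1 - X) *ᵥ (c' + Y *ᵥ (Ring.inverse (1 - X) *ᵥ c)) =
      (Ring.inverse (1 - X) * Y * Ring.inverse (1 - X)) *ᵥ c +
        ((0 : ℝ) • ((Ring.inverse (1 - X) * Y * Ring.inverse (1 - X)) *ᵥ c') +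
          (1 : ℝ) • (Ring.inverse (1 - (X + (0 : ℝ) • Y)) *ᵥ c')) := by
    simp [mulVec_add, mulVec_mulVec, add_comm, mul_assoc]
  rw [hf, hf']
  exact h

end Neumann

section KStep

set_option linter.unusedSectionVars false

variable (P : S → A → S → ℝ) (g : S → A → ℝ) (γ : ℝ) (p : D → S → A) (k : ℕ)

attribute [local instance] Matrix.linftyOpNormedRing Matrix.linftyOpNormedAlgebra

theorem corKernel_eq_linearCombination (w : D → ℝ) :
    corKernel P p w k = Fintype.linearCombination ℝ (fun d => detKernel P (p d) ^ k) w :=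
  (Fintype.linearCombination_apply ℝ _ w).symm

theorem blockCost_eq_linearCombination (w : D → ℝ) :
    blockCost P g γ p w k = Fintype.linearCombination ℝ (fun d => detCost P g γ (p d) k) w := by
  ext s
  simp [blockCost, Fintype.linearCombination_apply]

theorem corKernel_sub (w w' : D → ℝ) :
    corKernel P p (w' - w) k = corKernel P p w' k - corKernel P p w k := by
  simp only [corKernel_eq_linearCombination, map_sub]

theorem blockCost_sub (w w' : D → ℝ) :
    blockCost P g γ p (w' - w) k = blockCost P g γ p w' k - blockCost P g γ p w k := by
  simp only [blockCost_eq_linearCombination, map_sub]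

theorem detKernel_mem_rowStochastic (hP : ∀ s a, (∀ s', 0 ≤ P s a s') ∧ ∑ s', P s a s' = 1)
    (pol : S → A) : detKernel P pol ∈ rowStochastic ℝ S :=
  mem_rowStochastic_iff_sum.2 ⟨fun s s' => (hP s (pol s)).1 s', fun s => (hP s (pol s)).2⟩

theorem norm_corKernel_le_one (hP : ∀ s a, (∀ s', 0 ≤ P s a s') ∧ ∑ s', P s a s' = 1)
    {w : D → ℝ} (hw : w ∈ stdSimplex ℝ D) : ‖corKernel P p w k‖ ≤ 1 :=
  calc ‖corKernel P p w k‖ ≤ ∑ d, ‖w d • detKernel P (p d) ^ k‖ := norm_sum_le _ _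
    _ ≤ ∑ d, w d := Finset.sum_le_sum fun d _ => by
        rw [norm_smul, Real.norm_of_nonneg (hw.1 d)]
        exact mul_le_of_le_one_right (hw.1 d) (linfty_opNorm_le_one_of_mem_rowStochastic
          (pow_mem (detKernel_mem_rowStochastic P hP (p d)) k))
    _ = 1 := hw.2

theorem norm_discounted_corKernel_lt_one
    (hP : ∀ s a, (∀ s', 0 ≤ P s a s') ∧ ∑ s', P s a s' = 1) {w : D → ℝ}
    (hw : w ∈ stdSimplex ℝ D) (hγ0 : 0 ≤ γ) (hγ1 : γ < 1) (hk : k ≠ 0) :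
    ‖γ ^ k • corKernel P p w k‖ < 1 := by
  rw [norm_smul, Real.norm_of_nonneg (pow_nonneg hγ0 k)]
  exact (mul_le_of_le_one_right (pow_nonneg hγ0 k) (norm_corKernel_le_one P p k hP hw)).trans_lt
    (pow_lt_one₀ hγ0 hγ1 hk)

variable {P γ p k}

theorem Jk_eq_inverse_mulVec {w : D → ℝ} (hx : ‖γ ^ k • corKernel P p w k‖ < 1) :
    Jk P g γ p w k =
      Ring.inverse (1 - γ ^ k • corKernel P p w k) *ᵥ blockCost P g γ p w k := by
  ext s
  rw [Jk, ← (Pi.hasSum.1 (hasSum_pow_mulVec hx (blockCost P g γ p w k)) s).tsum_eq]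
  congr 1 with m
  rw [smul_pow, smul_mulVec, ← pow_mul, mul_comm k m]
  rfl

theorem dOcc_eq_vecMul_inverse {w : D → ℝ} (hx : ‖γ ^ k • corKernel P p w k‖ < 1)
    (μ : S → ℝ) :
    dOcc P γ p w k μ = (1 - γ ^ k) • (μ ᵥ* Ring.inverse (1 - γ ^ k • corKernel P p w k)) := by
  ext s
  rw [dOcc, Pi.smul_apply, smul_eq_mul, ← (Pi.hasSum.1 (hasSum_vecMul_pow hx μ) s).tsum_eq]
  congr 2 with m
  rw [smul_pow, vecMul_smul, ← pow_mul, mul_comm k m]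
  simp only [Pi.smul_apply, smul_eq_mul, vecMul, dotProduct, Finset.mul_sum]

theorem Jk_eq_blockCost_add {w : D → ℝ} (hx : ‖γ ^ k • corKernel P p w k‖ < 1) :
    Jk P g γ p w k = blockCost P g γ p w k + γ ^ k • (corKernel P p w k *ᵥ Jk P g γ p w k) := by
  have h : (1 - γ ^ k • corKernel P p w k) *ᵥ Jk P g γ p w k = blockCost P g γ p w k := by
    rw [Jk_eq_inverse_mulVec g hx, mulVec_mulVec,
      Ring.mul_inverse_cancel _ (isUnit_one_sub_of_norm_lt_one hx), one_mulVec]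
  rw [sub_mulVec, one_mulVec, smul_mulVec] at h
  rw [← h, sub_add_cancel]

theorem QkCor_eq (w w' : D → ℝ) (s : S) :
    QkCor P g γ p w k s w' =
      (blockCost P g γ p w' k + γ ^ k • (corKernel P p w' k *ᵥ Jk P g γ p w k)) s := by
  simp only [QkCor, Qk, blockCost, corKernel, Pi.add_apply, Pi.smul_apply, smul_eq_mul,
    mulVec, dotProduct, Matrix.sum_apply, Matrix.smul_apply, mul_add, Finset.sum_add_distrib,
    Finset.mul_sum, Finset.sum_mul]
  congr 1
  rw [Finset.sum_comm]
  exact Finset.sum_congr rfl fun d _ => Finset.sum_congr rfl fun s' _ => by ring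

theorem QkCor_sub_Jk {w : D → ℝ} (hx : ‖γ ^ k • corKernel P p w k‖ < 1) (w' : D → ℝ) (s : S) :
    QkCor P g γ p w k s w' - Jk P g γ p w k s =
      (blockCost P g γ p (w' - w) k +
        γ ^ k • (corKernel P p (w' - w) k *ᵥ Jk P g γ p w k)) s := by
  have hJ := congrFun (Jk_eq_blockCost_add g hx) s
  rw [QkCor_eq, blockCost_sub, corKernel_sub, sub_mulVec]
  simp only [Pi.add_apply, Pi.sub_apply, Pi.smul_apply, smul_eq_mul] at hJ ⊢
  linarith

theorem hasLineDerivAt_JkInit {w : D → ℝ} (hx : ‖γ ^ k • corKernel P p w k‖ < 1)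
    (μ : S → ℝ) (u : D → ℝ) :
    HasLineDerivAt ℝ (fun v => JkInit P g γ p v k μ)
      ((μ ᵥ* Ring.inverse (1 - γ ^ k • corKernel P p w k)) ⬝ᵥ
        (blockCost P g γ p u k + γ ^ k • (corKernel P p u k *ᵥ Jk P g γ p w k))) w u := by
  set X := γ ^ k • corKernel P p w k
  set Y := γ ^ k • corKernel P p u k
  have hkernel (t : ℝ) : γ ^ k • corKernel P p (w + t • u) k = X + t • Y := by
    rw [corKernel_eq_linearCombination, map_add, map_smul, ← corKernel_eq_linearCombination,
      ← corKernel_eq_linearCombination, smul_add, smul_comm]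
  have hcost (t : ℝ) :
      blockCost P g γ p (w + t • u) k = blockCost P g γ p w k + t • blockCost P g γ p u k := by
    simp only [blockCost_eq_linearCombination, map_add, map_smul]
  have hnear : ∀ᶠ t : ℝ in 𝓝 0, ‖X + t • Y‖ < 1 := by
    refine (continuous_const.add (continuous_id.smul continuous_const)).continuousAt.eventually
      (isOpen_lt continuous_norm continuous_const |>.mem_nhds ?_)
    simpa using hx
  have hlocal : (fun t : ℝ => JkInit P g γ p (w + t • u) k μ) =ᶠ[𝓝 0] fun t =>
      μ ⬝ᵥ (Ring.inverse (1 - (X + t • Y)) *ᵥ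
        (blockCost P g γ p w k + t • blockCost P g γ p u k)) :=
    hnear.mono fun t ht => by
      rw [← hkernel] at ht
      simp only [JkInit]
      rw [← dotProduct, Jk_eq_inverse_mulVec g ht, hkernel, hcost]
  have hderiv := (hasDerivAt_inverse_one_sub_mulVec hx Y (blockCost P g γ p w k)
    (blockCost P g γ p u k)).const_dotProduct μ
  rw [dotProduct_mulVec, ← Jk_eq_inverse_mulVec g hx, smul_mulVec] at hderiv
  exact hderiv.congr_of_eventuallyEq hlocal

end KStep

theorem directional_derivative_closed_form_general
    (P : S → A → S → ℝ) (g : S → A → ℝ) (γ : ℝ) (μ : S → ℝ)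
    (p : D → S → A) (k : ℕ) (w w' : D → ℝ)
    (hP : ∀ s a, (∀ s', 0 ≤ P s a s') ∧ ∑ s', P s a s' = 1)
    (hγ0 : 0 < γ) (hγ1 : γ < 1)
    (hk : 1 ≤ k)
    (hw : w ∈ stdSimplex ℝ D)
    (hdiff : DifferentiableAt ℝ (fun v : D → ℝ => JkInit P g γ p v k μ) w) :
    fderiv ℝ (fun v : D → ℝ => JkInit P g γ p v k μ) w (w' - w) =
      (1 / (1 - γ ^ k)) *
        ∑ s, dOcc P γ p w k μ s * (QkCor P g γ p w k s w' - Jk P g γ p w k s) := by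
  have hx := norm_discounted_corKernel_lt_one P γ p k hP hw hγ0.le hγ1 (by omega)
  have hγk : 1 - γ ^ k ≠ 0 := (sub_pos.2 (pow_lt_one₀ hγ0.le hγ1 (by omega))).ne'
  rw [← hdiff.lineDeriv_eq_fderiv, (hasLineDerivAt_JkInit g hx μ (w' - w)).lineDeriv,
    dOcc_eq_vecMul_inverse hx, dotProduct, Finset.mul_sum]
  refine Finset.sum_congr rfl fun s _ => ?_
  rw [QkCor_sub_Jk g hx, Pi.smul_apply, smul_eq_mul]
  field_simp

/-- **Closed form of the directional derivative of the k-step value.** Identifying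
correlated policies with points of the simplex `Δ(Π_det)`, for any `w, w' ∈ Δ(Π_det)`,
`∇_{π̃'−π̃} J^{π̃,k}(μ) = (1/(1−γ^k)) · E_{s ∼ d_μ^{π̃,k}} [Q^{π̃,k}(s, π̃') − J^{π̃,k}(s)]`. -/
theorem directional_derivative_closed_form
    (P : S → A → S → ℝ) (g : S → A → ℝ) (γ gmax : ℝ) (μ : S → ℝ)
    (p : D → S → A) (k : ℕ) (w w' : D → ℝ)
    (hP : ∀ s a, (∀ s', 0 ≤ P s a s') ∧ ∑ s', P s a s' = 1)
    (hg : ∀ s a, |g s a| ≤ gmax)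
    (hγ0 : 0 < γ) (hγ1 : γ < 1)
    (hμ : μ ∈ stdSimplex ℝ S)
    (hk : 1 ≤ k)
    (hw : w ∈ stdSimplex ℝ D) (hw' : w' ∈ stdSimplex ℝ D)
    (hdiff : DifferentiableAt ℝ (fun v : D → ℝ => JkInit P g γ p v k μ) w) :
    fderiv ℝ (fun v : D → ℝ => JkInit P g γ p v k μ) w (w' - w) =
      (1 / (1 - γ ^ k)) *
        ∑ s, dOcc P γ p w k μ s * (QkCor P g γ p w k s w' - Jk P g γ p w k s) :=
  directional_derivative_closed_form_general P g γ μ p k w w' hP hγ0 hγ1 hk hw hdiff
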